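/- Let T be a tree on n vertices, n ≥ 3. Then F₁(K_{1,n−1}) ≤ F₁(T) ≤ F₁(P_n), where K_{1,n−1} is the star on n vertices and P_n is the path on n vertices; i.e., among n-vertex trees the star minimizes and the path maximizes the first Zagreb–Fermat eccentricity index. -/
import Mathlib


open SimpleGraph Finset

variable {V : Type*}

/-- The Fermat distance of a vertex triple: minimum over all vertices σ of
    `d(σ,u) + d(σ,v) + d(σ,w)`. -/
noncomputable def fermatDist (G : SimpleGraph V) (u v w : V) : ℕ :=
  ⨅ σ : V, (G.dist σ u + G.dist σ v + G.dist σ w)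

/-- The Fermat eccentricity `ε₃(u;G)`: maximum Fermat distance of triples containing `u`. -/
noncomputable def fermatEcc [Fintype V] (G : SimpleGraph V) (u : V) : ℕ :=
  Finset.univ.sup fun p : V × V => fermatDist G u p.1 p.2

/-- The ordinary eccentricity `ε₂(u;G)`. -/
noncomputable def ecc2 [Fintype V] (G : SimpleGraph V) (u : V) : ℕ :=
  Finset.univ.sup fun v => G.dist u v

/-- The diameter of `G`. -/
noncomputable def gdiam [Fintype V] (G : SimpleGraph V) : ℕ :=
  Finset.univ.sup fun p : V × V => G.dist p.1 p.2

/-- A central vertex: one minimizing the ordinary eccentricity. -/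
def isCentral [Fintype V] (G : SimpleGraph V) (c : V) : Prop :=
  ∀ u : V, ecc2 G c ≤ ecc2 G u

/-- The number of edges of `G`. -/
noncomputable def numEdges [Fintype V] (G : SimpleGraph V) : ℕ :=
  letI := Classical.decEq V
  letI := Classical.decRel G.Adj
  G.edgeFinset.card

/-- The first Zagreb–Fermat eccentricity index `F₁(G) = Σ_u ε₃(u)²`. -/
noncomputable def F1 [Fintype V] (G : SimpleGraph V) : ℕ :=
  ∑ u : V, (fermatEcc G u) ^ 2

/-- The second Zagreb–Fermat eccentricity index `F₂(G) = Σ_{uv ∈ E} ε₃(u)·ε₃(v)`. -/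
noncomputable def F2 [Fintype V] (G : SimpleGraph V) : ℕ :=
  letI := Classical.decEq V
  letI := Classical.decRel G.Adj
  ∑ e ∈ G.edgeFinset,
    Sym2.lift ⟨fun u v => fermatEcc G u * fermatEcc G v, fun _ _ => mul_comm _ _⟩ e

/-- `u` lies in the subtree `T_{v_i}` hanging off the `i`-th vertex of the path `P`:
its geodesic to every vertex of `P` passes through `P.getVert i`. -/
def inSubtree (G : SimpleGraph V) {a b : V} (P : G.Walk a b) (i : ℕ) (u : V) : Prop :=
  ∀ j ≤ P.length, G.dist u (P.getVert j) = G.dist u (P.getVert i) + G.dist (P.getVert i) (P.getVert j)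

/-- `ℓ_i`: the height of the subtree `T_{v_i}`. -/
noncomputable def subtreeHeight [Fintype V] (G : SimpleGraph V) {a b : V} (P : G.Walk a b)
    (i : ℕ) : ℕ :=
  letI := Classical.decPred (inSubtree G P i)
  Finset.univ.sup fun u => if inSubtree G P i u then G.dist (P.getVert i) u else 0


/-! ### Auxiliary lemmas -/

section Aux
variable {G : SimpleGraph V}

lemma fermatDist_le_point (G : SimpleGraph V) (u v w σ : V) :
    fermatDist G u v w ≤ G.dist σ u + G.dist σ v + G.dist σ w :=
  Nat.sInf_le ⟨σ, rfl⟩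

lemma exists_fermat_point [Nonempty V] (G : SimpleGraph V) (u v w : V) :
    ∃ σ, fermatDist G u v w = G.dist σ u + G.dist σ v + G.dist σ w := by
  have h := Nat.sInf_mem (Set.range_nonempty
    (fun σ : V => G.dist σ u + G.dist σ v + G.dist σ w))
  obtain ⟨σ, hσ⟩ := h
  exact ⟨σ, hσ.symm⟩

lemma dist_le_fermatDist (hG : G.Connected) (u v w : V) :
    G.dist v w ≤ fermatDist G u v w := by
  have : Nonempty V := hG.nonempty
  obtain ⟨σ, hσ⟩ := exists_fermat_point G u v w
  rw [hσ]
  calc G.dist v w ≤ G.dist v σ + G.dist σ w := hG.dist_triangle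
    _ ≤ G.dist σ u + G.dist σ v + G.dist σ w := by
        rw [SimpleGraph.dist_comm (G := G) (u := v) (v := σ)]; omega

lemma perim_le_two_fermatDist (hG : G.Connected) (u v w : V) :
    G.dist u v + G.dist u w + G.dist v w ≤ 2 * fermatDist G u v w := by
  have : Nonempty V := hG.nonempty
  obtain ⟨σ, hσ⟩ := exists_fermat_point G u v w
  rw [hσ]
  have h1 : G.dist u v ≤ G.dist σ u + G.dist σ v := by
    calc G.dist u v ≤ G.dist u σ + G.dist σ v := hG.dist_triangle
      _ = G.dist σ u + G.dist σ v := by rw [SimpleGraph.dist_comm (G := G) (u := u) (v := σ)]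
  have h2 : G.dist u w ≤ G.dist σ u + G.dist σ w := by
    calc G.dist u w ≤ G.dist u σ + G.dist σ w := hG.dist_triangle
      _ = G.dist σ u + G.dist σ w := by rw [SimpleGraph.dist_comm (G := G) (u := u) (v := σ)]
  have h3 : G.dist v w ≤ G.dist σ v + G.dist σ w := by
    calc G.dist v w ≤ G.dist v σ + G.dist σ w := hG.dist_triangle
      _ = G.dist σ v + G.dist σ w := by rw [SimpleGraph.dist_comm (G := G) (u := v) (v := σ)]
  omega

lemma fermatDist_le_fermatEcc [Fintype V] (G : SimpleGraph V) (u v w : V) :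
    fermatDist G u v w ≤ fermatEcc G u := by
  have := Finset.le_sup (f := fun p : V × V => fermatDist G u p.1 p.2)
    (Finset.mem_univ (v, w)) (s := Finset.univ)
  simpa [fermatEcc] using this

lemma fermatEcc_le [Fintype V] (G : SimpleGraph V) (u : V) (m : ℕ)
    (h : ∀ v w, fermatDist G u v w ≤ m) : fermatEcc G u ≤ m := by
  unfold fermatEcc
  exact Finset.sup_le fun p _ => h p.1 p.2

lemma dist_le_fermatEcc [Fintype V] (hG : G.Connected) (u v : V) :
    G.dist u v ≤ fermatEcc G u := by
  have h := perim_le_two_fermatDist hG u v v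
  have h2 := fermatDist_le_fermatEcc G u v v
  have h0 : G.dist v v = 0 := SimpleGraph.dist_self
  omega

/-- Truncate a path at the first vertex belonging to a list `L`. -/
lemma walk_until {a b : V} (R : G.Walk a b) : R.IsPath → ∀ (L : List V), b ∈ L →
    ∃ m, m ∈ L ∧ ∃ R' : G.Walk a m, R'.IsPath ∧ R'.length ≤ R.length ∧
      R'.support ⊆ R.support ∧ (∀ x ∈ R'.support, x ∈ L → x = m) := by
  classical
  induction R with
  | nil =>
    intro _ L hb
    exact ⟨_, hb, Walk.nil, Walk.IsPath.nil, le_refl _,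
      by intro x hx; exact hx,
      by intro x hx _; simpa using hx⟩
  | @cons a c b h p ih =>
    intro hR L hb
    rw [Walk.cons_isPath_iff] at hR
    by_cases ha : a ∈ L
    · refine ⟨a, ha, Walk.nil, Walk.IsPath.nil, Nat.zero_le _, ?_, ?_⟩
      · intro x hx
        simp only [Walk.support_nil, List.mem_singleton] at hx
        subst hx
        exact Walk.start_mem_support _
      · intro x hx _
        simpa using hx
    · obtain ⟨m, hmL, R', hR'path, hR'len, hR'sub, hR'only⟩ := ih hR.1 L hb
      refine ⟨m, hmL, Walk.cons h R', ?_, by simpa using Nat.succ_le_succ hR'len, ?_, ?_⟩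
      · rw [Walk.cons_isPath_iff]
        exact ⟨hR'path, fun hmem => hR.2 (hR'sub hmem)⟩
      · intro x hx
        rcases List.mem_cons.mp (by simpa using hx) with rfl | hx'
        · exact Walk.start_mem_support _
        · exact List.mem_cons_of_mem _ (hR'sub hx')
      · intro x hx hxL
        rcases List.mem_cons.mp (by simpa using hx) with rfl | hx'
        · exact absurd hxL ha
        · exact hR'only x hx' hxL

/-- In a connected graph, every Fermat distance is at most `|V| - 1`
(the size of a Steiner tree of the triple). -/
lemma fermatDist_le_card_sub_one [Fintype V] (hG : G.Connected) (u v w : V) :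
    fermatDist G u v w ≤ Fintype.card V - 1 := by
  classical
  obtain ⟨Q0⟩ := hG.preconnected u v
  set Q := Q0.bypass with hQdef
  have hQ : Q.IsPath := Q0.bypass_isPath
  obtain ⟨R0⟩ := hG.preconnected w u
  have hu : u ∈ Q.support := Q.start_mem_support
  obtain ⟨m, hmQ, R', hR'path, _, _, hR'only⟩ :=
    walk_until R0.bypass R0.bypass_isPath Q.support hu
  refine le_trans (fermatDist_le_point G u v w m) ?_
  have hAcard : Q.support.toFinset.card = Q.length + 1 := by
    rw [List.toFinset_card_of_nodup hQ.support_nodup, Walk.length_support]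
  have hBcard : R'.support.toFinset.card = R'.length + 1 := by
    rw [List.toFinset_card_of_nodup hR'path.support_nodup, Walk.length_support]
  have hinter : Q.support.toFinset ∩ R'.support.toFinset = {m} := by
    apply Finset.Subset.antisymm
    · intro x hx
      rw [Finset.mem_inter, List.mem_toFinset, List.mem_toFinset] at hx
      simp [hR'only x hx.2 hx.1]
    · intro x hx
      rw [Finset.mem_singleton] at hx
      subst hx
      rw [Finset.mem_inter, List.mem_toFinset, List.mem_toFinset]
      exact ⟨hmQ, R'.end_mem_support⟩
  have hcount : Q.length + 1 + (R'.length + 1) - 1 ≤ Fintype.card V := by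
    have h1 := Finset.card_union_add_card_inter Q.support.toFinset R'.support.toFinset
    have h2 : (Q.support.toFinset ∪ R'.support.toFinset).card ≤ Fintype.card V :=
      Finset.card_le_card (Finset.subset_univ _) |>.trans_eq Finset.card_univ
    rw [hinter, Finset.card_singleton, hAcard, hBcard] at h1
    omega
  have hsplit : (Q.takeUntil m hmQ).length + (Q.dropUntil m hmQ).length = Q.length := by
    have := congrArg Walk.length (Q.take_spec hmQ)
    rwa [Walk.length_append] at this
  have hdum : G.dist u m ≤ (Q.takeUntil m hmQ).length := dist_le _
  have hdmv : G.dist m v ≤ (Q.dropUntil m hmQ).length := dist_le _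
  have hdmw : G.dist m w ≤ R'.length := by
    have := dist_le R'.reverse
    rwa [Walk.length_reverse] at this
  have hmu : G.dist m u = G.dist u m := SimpleGraph.dist_comm
  omega

lemma fermatEcc_le_card_sub_one [Fintype V] (hG : G.Connected) (u : V) :
    fermatEcc G u ≤ Fintype.card V - 1 :=
  fermatEcc_le G u _ fun v w => fermatDist_le_card_sub_one hG u v w

lemma exists_two_others [Fintype V] (h3 : 3 ≤ Fintype.card V) (u : V) :
    ∃ v w : V, v ≠ u ∧ w ≠ u ∧ v ≠ w := by
  classical
  have h1 : 2 ≤ (Finset.univ.erase u).card := by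
    rw [Finset.card_erase_of_mem (Finset.mem_univ u), Finset.card_univ]; omega
  obtain ⟨v, hv⟩ := Finset.card_pos.mp (by omega : 0 < (Finset.univ.erase u).card)
  have h2 : 1 ≤ ((Finset.univ.erase u).erase v).card := by
    rw [Finset.card_erase_of_mem hv]; omega
  obtain ⟨w, hw⟩ := Finset.card_pos.mp
    (by omega : 0 < ((Finset.univ.erase u).erase v).card)
  rw [Finset.mem_erase] at hv hw
  rw [Finset.mem_erase] at hw
  exact ⟨v, w, hv.1, hw.2.1, fun h => hw.1 h.symm⟩

lemma exists_notin [Fintype V] (s : Finset V) (h : s.card < Fintype.card V) :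
    ∃ w, w ∉ s := by
  classical
  by_contra h'
  push_neg at h'
  have : s = Finset.univ := Finset.eq_univ_iff_forall.mpr h'
  rw [this, Finset.card_univ] at h
  omega

lemma two_le_fermatEcc [Fintype V] (hG : G.Connected) (h3 : 3 ≤ Fintype.card V) (u : V) :
    2 ≤ fermatEcc G u := by
  obtain ⟨v, w, hvu, hwu, hvw⟩ := exists_two_others h3 u
  have hp := perim_le_two_fermatDist hG u v w
  have h1 : 0 < G.dist u v := hG.pos_dist_of_ne (Ne.symm hvu)
  have h2 : 0 < G.dist u w := hG.pos_dist_of_ne (Ne.symm hwu)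
  have h3' : 0 < G.dist v w := hG.pos_dist_of_ne hvw
  have hle := fermatDist_le_fermatEcc G u v w
  omega

end Aux

/-! ### Tree-specific lemmas -/

section Tree
variable {T : SimpleGraph V}

lemma path2_eq (hT : T.IsTree) {u v m₁ m₂ : V} (huv : u ≠ v)
    (h1 : T.Adj u m₁) (h1' : T.Adj m₁ v) (h2 : T.Adj u m₂) (h2' : T.Adj m₂ v) : m₁ = m₂ := by
  obtain ⟨p, _, hup⟩ := hT.existsUnique_path u v
  have mk : ∀ (m) (h : T.Adj u m) (h' : T.Adj m v),
      (Walk.cons h (Walk.cons h' Walk.nil)).IsPath := by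
    intro m h h'
    rw [Walk.cons_isPath_iff, Walk.cons_isPath_iff]
    refine ⟨⟨Walk.IsPath.nil, by simp [h'.ne]⟩, ?_⟩
    simp [huv, h.ne']
    exact fun hh => (h.ne' hh.symm).elim
  have e1 := hup _ (mk m₁ h1 h1')
  have e2 := hup _ (mk m₂ h2 h2')
  have hs := congrArg Walk.support (e1.trans e2.symm)
  simpa using hs

lemma no_triangle (hT : T.IsTree) {u v x : V} (huv : T.Adj u v) (h1 : T.Adj u x)
    (h2 : T.Adj x v) : False := by
  obtain ⟨p, _, hup⟩ := hT.existsUnique_path u v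
  have P1 : (Walk.cons huv Walk.nil).IsPath := by
    rw [Walk.cons_isPath_iff]
    exact ⟨Walk.IsPath.nil, by simp [huv.ne]⟩
  have P2 : (Walk.cons h1 (Walk.cons h2 Walk.nil)).IsPath := by
    rw [Walk.cons_isPath_iff, Walk.cons_isPath_iff]
    refine ⟨⟨Walk.IsPath.nil, by simp [h2.ne]⟩, ?_⟩
    simp
    exact ⟨h1.ne, huv.ne⟩
  have heq := (hup _ P1).trans (hup _ P2).symm
  have := congrArg Walk.length heq
  simp at this

lemma adj_of_fermatEcc_le_two [Fintype V] (hT : T.IsTree) (h4 : 4 ≤ Fintype.card V)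
    {z : V} (hz : fermatEcc T z ≤ 2) : ∀ x, x ≠ z → T.Adj z x := by
  classical
  intro x hx
  have hconn := hT.isConnected
  by_contra hnadj
  have hd1 : 0 < T.dist z x := hconn.pos_dist_of_ne (Ne.symm hx)
  have hd2 : T.dist z x ≠ 1 := fun h => hnadj (SimpleGraph.dist_eq_one_iff_adj.mp h)
  have hdle : T.dist z x ≤ 2 := le_trans (dist_le_fermatEcc hconn z x) hz
  set N := Finset.univ.filter (fun m => T.Adj z m ∧ T.Adj x m) with hN
  have hNcard : N.card ≤ 1 := by
    rw [Finset.card_le_one]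
    intro m1 hm1 m2 hm2
    rw [hN, Finset.mem_filter] at hm1 hm2
    exact path2_eq hT (Ne.symm hx) hm1.2.1 hm1.2.2.symm hm2.2.1 hm2.2.2.symm
  have hscard : ({z, x} ∪ N).card < Fintype.card V := by
    have hu := Finset.card_union_le ({z, x} : Finset V) N
    have hzx : ({z, x} : Finset V).card ≤ 2 := Finset.card_le_two
    omega
  obtain ⟨w, hw⟩ := exists_notin _ hscard
  rw [Finset.mem_union, Finset.mem_insert, Finset.mem_singleton] at hw
  push_neg at hw
  obtain ⟨⟨hwz, hwx⟩, hwN⟩ := hw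
  have h1 : 0 < T.dist z w := hconn.pos_dist_of_ne (Ne.symm hwz)
  have h2 : 0 < T.dist x w := hconn.pos_dist_of_ne (Ne.symm hwx)
  have h3 : ¬(T.dist z w = 1 ∧ T.dist x w = 1) := by
    rintro ⟨ha, hb⟩
    apply hwN
    rw [hN, Finset.mem_filter]
    exact ⟨Finset.mem_univ _, SimpleGraph.dist_eq_one_iff_adj.mp ha,
      SimpleGraph.dist_eq_one_iff_adj.mp hb⟩
  have hp := perim_le_two_fermatDist hconn z x w
  have hle := fermatDist_le_fermatEcc T z x w
  omega

lemma fermatEcc_le_two_unique [Fintype V] (hT : T.IsTree) (h4 : 4 ≤ Fintype.card V)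
    {u u' : V} (hu : fermatEcc T u ≤ 2) (hu' : fermatEcc T u' ≤ 2) : u = u' := by
  classical
  by_contra hne
  have hadj : T.Adj u u' := adj_of_fermatEcc_le_two hT h4 hu u' (Ne.symm hne)
  have hcd : ({u, u'} : Finset V).card < Fintype.card V := by
    have : ({u, u'} : Finset V).card ≤ 2 := Finset.card_le_two
    omega
  obtain ⟨x, hx⟩ := exists_notin _ hcd
  rw [Finset.mem_insert, Finset.mem_singleton] at hx
  push_neg at hx
  have h1 : T.Adj u x := adj_of_fermatEcc_le_two hT h4 hu x hx.1
  have h2 : T.Adj u' x := adj_of_fermatEcc_le_two hT h4 hu' x hx.2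
  exact no_triangle hT hadj h1 h2.symm

end Tree

/-! ### Star graph lemmas -/

section Star
variable {k : ℕ}

lemma star_dist_center_le (x : Fin 1 ⊕ Fin k) (a : Fin 1) :
    (completeBipartiteGraph (Fin 1) (Fin k)).dist (Sum.inl a) x ≤ 1 := by
  rcases x with a' | b
  · have : a = a' := Subsingleton.elim _ _
    subst this
    simp [SimpleGraph.dist_self]
  · have hadj : (completeBipartiteGraph (Fin 1) (Fin k)).Adj (Sum.inl a) (Sum.inr b) := by simp
    have := SimpleGraph.dist_le (Walk.cons hadj Walk.nil)
    simpa using this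

lemma star_center_fd (a : Fin 1) (v w : Fin 1 ⊕ Fin k) :
    fermatDist (completeBipartiteGraph (Fin 1) (Fin k)) (Sum.inl a) v w ≤ 2 := by
  have h := fermatDist_le_point (completeBipartiteGraph (Fin 1) (Fin k))
    (Sum.inl a) v w (Sum.inl a)
  have h0 : (completeBipartiteGraph (Fin 1) (Fin k)).dist (Sum.inl a) (Sum.inl a) = 0 :=
    SimpleGraph.dist_self
  have h1 := star_dist_center_le (k := k) v a
  have h2 := star_dist_center_le (k := k) w a
  omega

lemma star_leaf_fd (b : Fin k) (v w : Fin 1 ⊕ Fin k) :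
    fermatDist (completeBipartiteGraph (Fin 1) (Fin k)) (Sum.inr b) v w ≤ 3 := by
  have h := fermatDist_le_point (completeBipartiteGraph (Fin 1) (Fin k))
    (Sum.inr b) v w (Sum.inl 0)
  have h1 := star_dist_center_le (Sum.inr b) (0 : Fin 1)
  have h2 := star_dist_center_le (k := k) v 0
  have h3 := star_dist_center_le (k := k) w 0
  omega

lemma st2_dist_lr (a : Fin 1) (b : Fin 2) :
    (completeBipartiteGraph (Fin 1) (Fin 2)).dist (Sum.inl a) (Sum.inr b) ≤ 1 :=
  star_dist_center_le (Sum.inr b) a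

lemma st2_dist_rr (b c : Fin 2) :
    (completeBipartiteGraph (Fin 1) (Fin 2)).dist (Sum.inr b) (Sum.inr c) ≤ 2 := by
  have h1 : (completeBipartiteGraph (Fin 1) (Fin 2)).Adj (Sum.inr b) (Sum.inl 0) := by simp
  have h2 : (completeBipartiteGraph (Fin 1) (Fin 2)).Adj (Sum.inl 0) (Sum.inr c) := by simp
  have := SimpleGraph.dist_le (Walk.cons h1 (Walk.cons h2 Walk.nil))
  simpa using this

lemma star3_leaf_fd (b : Fin 2) (v w : Fin 1 ⊕ Fin 2) :
    fermatDist (completeBipartiteGraph (Fin 1) (Fin 2)) (Sum.inr b) v w ≤ 2 := by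
  rcases v with a | c
  · have h := fermatDist_le_point (completeBipartiteGraph (Fin 1) (Fin 2))
      (Sum.inr b) (Sum.inl a) w (Sum.inl a)
    have h1 := st2_dist_lr a b
    have h0 : (completeBipartiteGraph (Fin 1) (Fin 2)).dist (Sum.inl a) (Sum.inl a) = 0 :=
      SimpleGraph.dist_self
    have h2 := star_dist_center_le (k := 2) w a
    omega
  · rcases w with a | d
    · have h := fermatDist_le_point (completeBipartiteGraph (Fin 1) (Fin 2))
        (Sum.inr b) (Sum.inr c) (Sum.inl a) (Sum.inl a)
      have h1 := st2_dist_lr a b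
      have h2 := st2_dist_lr a c
      have h0 : (completeBipartiteGraph (Fin 1) (Fin 2)).dist (Sum.inl a) (Sum.inl a) = 0 :=
        SimpleGraph.dist_self
      omega
    · by_cases hc : c = b
      · subst hc
        have h := fermatDist_le_point (completeBipartiteGraph (Fin 1) (Fin 2))
          (Sum.inr c) (Sum.inr c) (Sum.inr d) (Sum.inr c)
        have h0 : (completeBipartiteGraph (Fin 1) (Fin 2)).dist (Sum.inr c) (Sum.inr c) = 0 :=
          SimpleGraph.dist_self
        have h2 := st2_dist_rr c d
        omega
      · by_cases hd : d = b
        · subst hd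
          have h := fermatDist_le_point (completeBipartiteGraph (Fin 1) (Fin 2))
            (Sum.inr d) (Sum.inr c) (Sum.inr d) (Sum.inr d)
          have h0 : (completeBipartiteGraph (Fin 1) (Fin 2)).dist (Sum.inr d) (Sum.inr d) = 0 :=
            SimpleGraph.dist_self
          have h2 := st2_dist_rr d c
          omega
        · have hcd : c = d := by
            have hb := b.is_lt; have hc' := c.is_lt; have hd' := d.is_lt
            have hcb : c.val ≠ b.val := fun h => hc (Fin.ext h)
            have hdb : d.val ≠ b.val := fun h => hd (Fin.ext h)
            apply Fin.ext; omega
          subst hcd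
          have h := fermatDist_le_point (completeBipartiteGraph (Fin 1) (Fin 2))
            (Sum.inr b) (Sum.inr c) (Sum.inr c) (Sum.inr c)
          have h0 : (completeBipartiteGraph (Fin 1) (Fin 2)).dist (Sum.inr c) (Sum.inr c) = 0 :=
            SimpleGraph.dist_self
          have h2 := st2_dist_rr c b
          omega

end Star

/-! ### Path graph lemmas -/

lemma pathGraph_walk_bound {n : ℕ} {i j : Fin n} (p : (SimpleGraph.pathGraph n).Walk i j) :
    (j : ℕ) ≤ (i : ℕ) + p.length ∧ (i : ℕ) ≤ (j : ℕ) + p.length := by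
  induction p with
  | nil => simp
  | cons h q ih =>
    rw [SimpleGraph.pathGraph_adj] at h
    rw [SimpleGraph.Walk.length_cons]
    omega

lemma pathGraph_dist_ge (m : ℕ) :
    m ≤ (SimpleGraph.pathGraph (m + 1)).dist ⟨0, by omega⟩ ⟨m, by omega⟩ := by
  obtain ⟨p, hp⟩ := (SimpleGraph.pathGraph_connected m).exists_walk_length_eq_dist
    ⟨0, by omega⟩ ⟨m, by omega⟩
  have := (pathGraph_walk_bound p).1
  simp only at this
  omega

/-! ### Main theorem -/

/-- Among trees on `n ≥ 3` vertices, the star minimizes and the path maximizes the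
first Zagreb–Fermat eccentricity index: `F₁(K_{1,n-1}) ≤ F₁(T) ≤ F₁(P_n)`. -/
theorem F1_star_le_F1_le_F1_path [Fintype V] (T : SimpleGraph V) (hT : T.IsTree)
    (n : ℕ) (hcard : Fintype.card V = n) (hn : 3 ≤ n) :
    F1 (completeBipartiteGraph (Fin 1) (Fin (n - 1))) ≤ F1 T ∧
    F1 T ≤ F1 (SimpleGraph.pathGraph n) := by
  classical
  have hconn := hT.isConnected
  have h3V : 3 ≤ Fintype.card V := by omega
  constructor
  · -- star ≤ T
    have hstar_center : ∀ a : Fin 1,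
        fermatEcc (completeBipartiteGraph (Fin 1) (Fin (n - 1))) (Sum.inl a) ≤ 2 :=
      fun a => fermatEcc_le _ _ 2 (star_center_fd a)
    rcases eq_or_lt_of_le hn with h3 | h4
    · -- n = 3
      subst h3
      -- star side : F1 ≤ 12
      have hstar_leaf : ∀ b : Fin (3 - 1),
          fermatEcc (completeBipartiteGraph (Fin 1) (Fin (3 - 1))) (Sum.inr b) ≤ 2 :=
        fun b => fermatEcc_le _ _ 2 (star3_leaf_fd b)
      have hstar : F1 (completeBipartiteGraph (Fin 1) (Fin (3 - 1))) ≤ 12 := by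
        have hbound : ∀ u : Fin 1 ⊕ Fin (3 - 1),
            fermatEcc (completeBipartiteGraph (Fin 1) (Fin (3 - 1))) u ^ 2 ≤
              Sum.elim (fun _ => 4) (fun _ => 4) u := by
          rintro (a | b)
          · have := hstar_center a
            simp only [Sum.elim_inl]
            nlinarith
          · have := hstar_leaf b
            simp only [Sum.elim_inr]
            nlinarith
        calc F1 (completeBipartiteGraph (Fin 1) (Fin (3 - 1)))
            ≤ ∑ u : Fin 1 ⊕ Fin (3 - 1), Sum.elim (fun _ => 4) (fun _ => 4) u :=
              Finset.sum_le_sum fun u _ => hbound u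
          _ = 12 := by simp [Fintype.sum_sum_type]
      -- tree side : F1 ≥ 12
      have htree : 12 ≤ F1 T := by
        have hu : ∀ u : V, 4 ≤ fermatEcc T u ^ 2 := by
          intro u
          have := two_le_fermatEcc hconn h3V u
          nlinarith
        calc (12 : ℕ) = ∑ _u : V, 4 := by
              rw [Finset.sum_const, Finset.card_univ, hcard, smul_eq_mul]
          _ ≤ ∑ u : V, fermatEcc T u ^ 2 := Finset.sum_le_sum fun u _ => hu u
          _ = F1 T := rfl
      omega
    · -- 4 ≤ n
      have h4V : 4 ≤ Fintype.card V := by omega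
      -- star side : F1 ≤ 4 + 9 * (n - 1)
      have hstar_leaf : ∀ b : Fin (n - 1),
          fermatEcc (completeBipartiteGraph (Fin 1) (Fin (n - 1))) (Sum.inr b) ≤ 3 :=
        fun b => fermatEcc_le _ _ 3 (star_leaf_fd b)
      have hstar : F1 (completeBipartiteGraph (Fin 1) (Fin (n - 1))) ≤ 4 + 9 * (n - 1) := by
        have hbound : ∀ u : Fin 1 ⊕ Fin (n - 1),
            fermatEcc (completeBipartiteGraph (Fin 1) (Fin (n - 1))) u ^ 2 ≤
              Sum.elim (fun _ => 4) (fun _ => 9) u := by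
          rintro (a | b)
          · have := hstar_center a
            simp only [Sum.elim_inl]
            nlinarith
          · have := hstar_leaf b
            simp only [Sum.elim_inr]
            nlinarith
        calc F1 (completeBipartiteGraph (Fin 1) (Fin (n - 1)))
            ≤ ∑ u : Fin 1 ⊕ Fin (n - 1), Sum.elim (fun _ => 4) (fun _ => 9) u :=
              Finset.sum_le_sum fun u _ => hbound u
          _ = 4 + 9 * (n - 1) := by simp [Fintype.sum_sum_type, mul_comm]
      -- tree side : F1 ≥ 4 + 9 * (n - 1)
      have htree : 4 + 9 * (n - 1) ≤ F1 T := by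
        by_cases hex : ∃ u₀ : V, fermatEcc T u₀ ≤ 2
        · obtain ⟨u₀, hu₀⟩ := hex
          have hothers : ∀ u ∈ Finset.univ.erase u₀, 9 ≤ fermatEcc T u ^ 2 := by
            intro u hu
            rw [Finset.mem_erase] at hu
            have h3le : 3 ≤ fermatEcc T u := by
              by_contra hlt
              push_neg at hlt
              exact hu.1 (fermatEcc_le_two_unique hT h4V (by omega) hu₀)
            nlinarith
          have hu₀sq : 4 ≤ fermatEcc T u₀ ^ 2 := by
            have := two_le_fermatEcc hconn h3V u₀
            nlinarith
          have hsum : 9 * (n - 1) ≤ ∑ u ∈ Finset.univ.erase u₀, fermatEcc T u ^ 2 := by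
            calc 9 * (n - 1) = ∑ _u ∈ Finset.univ.erase u₀, 9 := by
                  rw [Finset.sum_const, Finset.card_erase_of_mem (Finset.mem_univ u₀),
                    Finset.card_univ, hcard, smul_eq_mul, mul_comm]
              _ ≤ _ := Finset.sum_le_sum hothers
          have hsplit : F1 T = fermatEcc T u₀ ^ 2 + ∑ u ∈ Finset.univ.erase u₀,
              fermatEcc T u ^ 2 := by
            rw [F1, ← Finset.add_sum_erase _ _ (Finset.mem_univ u₀)]
          omega
        · push_neg at hex
          have hall : ∀ u : V, 9 ≤ fermatEcc T u ^ 2 := by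
            intro u
            have := hex u
            nlinarith
          have : 9 * n ≤ F1 T := by
            calc 9 * n = ∑ _u : V, 9 := by
                  rw [Finset.sum_const, Finset.card_univ, hcard, smul_eq_mul, mul_comm]
              _ ≤ ∑ u : V, fermatEcc T u ^ 2 := Finset.sum_le_sum fun u _ => hall u
              _ = F1 T := rfl
          omega
      omega
  · -- T ≤ path
    obtain ⟨m, rfl⟩ : ∃ m, n = m + 1 := ⟨n - 1, by omega⟩
    have hTle : F1 T ≤ (m + 1) * m ^ 2 := by
      have hle : ∀ u : V, fermatEcc T u ≤ m := by
        intro u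
        have := fermatEcc_le_card_sub_one hconn u
        omega
      calc F1 T ≤ ∑ _u : V, m ^ 2 :=
            Finset.sum_le_sum fun u _ => Nat.pow_le_pow_left (hle u) 2
        _ = (m + 1) * m ^ 2 := by
            rw [Finset.sum_const, Finset.card_univ, hcard, smul_eq_mul]
    have hPge : (m + 1) * m ^ 2 ≤ F1 (SimpleGraph.pathGraph (m + 1)) := by
      have hge : ∀ u : Fin (m + 1), m ≤ fermatEcc (SimpleGraph.pathGraph (m + 1)) u := by
        intro u
        have hd := pathGraph_dist_ge m
        have hfd := dist_le_fermatDist (SimpleGraph.pathGraph_connected m) u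
          ⟨0, by omega⟩ ⟨m, by omega⟩
        have hfe := fermatDist_le_fermatEcc (SimpleGraph.pathGraph (m + 1)) u
          ⟨0, by omega⟩ ⟨m, by omega⟩
        omega
      calc (m + 1) * m ^ 2 = ∑ _u : Fin (m + 1), m ^ 2 := by
            rw [Finset.sum_const, Finset.card_univ, Fintype.card_fin, smul_eq_mul]
        _ ≤ ∑ u : Fin (m + 1), fermatEcc (SimpleGraph.pathGraph (m + 1)) u ^ 2 :=
            Finset.sum_le_sum fun u _ => Nat.pow_le_pow_left (hge u) 2
        _ = F1 (SimpleGraph.pathGraph (m + 1)) := rfl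
    exact hTle.trans hPge
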